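/- Let S ⊂ ℝ² be a domain, a ∈ ℝ, and suppose u, v ∈ C²(S) satisfy ∂u/∂x = ∂v/∂y and ∂v/∂x = −2(v² + y² + a²)^{1/2} ∂u/∂y on S. Then v satisfies ∂/∂x[(v² + y² + a²)^{−1/2} ∂v/∂x] + 2 ∂²v/∂y² = 0 on the interior of S. -/

import Mathlib

open Set Filter Topology

/-! On the open set `interior S` the second equation reads
`(v² + y² + a²)^{-1/2} ∂v/∂x = -2 ∂u/∂y`; differentiating in `x` and using
`∂²u/∂x∂y = ∂²u/∂y∂x = ∂²v/∂y²` (the first equation) gives `Q(v) = 0`.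

The one delicate point is a zero of the weight (`a = 0`, `v = 0`, `y = 0`), where the
left side is `0` by the convention `0^{-1/2} = 0`, so one needs `∂u/∂y = 0` there. Along the
vertical line through such a point, `∂v/∂x = -2 |y| √((v/y)² + 1) ∂u/∂y`; since `∂v/∂x` is
differentiable in `y`, its right and left difference quotients `∓2 √(…) ∂u/∂y` have the same limit,
which forces `∂u/∂y = 0`. -/

/-- The divergence-form quasilinear operator
`Q(v) = ∂/∂x[(v² + y² + a²)^{-1/2} ∂v/∂x] + 2 ∂²v/∂y²`. -/
noncomputable def Qop (a : ℝ) (v : ℝ × ℝ → ℝ) (p : ℝ × ℝ) : ℝ :=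
  fderiv ℝ (fun q => ((v q) ^ 2 + q.2 ^ 2 + a ^ 2) ^ (-(1 : ℝ) / 2)
      * fderiv ℝ v q ((1 : ℝ), (0 : ℝ))) p ((1 : ℝ), (0 : ℝ))
  + 2 * fderiv ℝ (fun q => fderiv ℝ v q ((0 : ℝ), (1 : ℝ))) p ((0 : ℝ), (1 : ℝ))

theorem DifferentiableAt.eq_zero_of_eventuallyEq_abs_sub_mul {f k : ℝ → ℝ} {x : ℝ}
    (hf : DifferentiableAt ℝ f x) (hk : ContinuousAt k x)
    (h : f =ᶠ[𝓝 x] fun t => |t - x| * k t) : k x = 0 := by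
  have hfx : f x = 0 := by simpa using h.eq_of_nhds
  have hslope := hasDerivAt_iff_tendsto_slope.mp hf.hasDerivAt
  have hright : Tendsto (slope f x) (𝓝[>] x) (𝓝 (k x)) := by
    refine (hk.tendsto.mono_left nhdsWithin_le_nhds).congr' ?_
    filter_upwards [nhdsWithin_le_nhds h, self_mem_nhdsWithin] with t ht hxt
    have hxt : 0 < t - x := sub_pos.mpr hxt
    rw [slope_def_field, ht, hfx, sub_zero, _root_.abs_of_pos hxt]
    field_simp [hxt.ne']
  have hleft : Tendsto (slope f x) (𝓝[<] x) (𝓝 (-k x)) := by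
    refine (hk.tendsto.neg.mono_left nhdsWithin_le_nhds).congr' ?_
    filter_upwards [nhdsWithin_le_nhds h, self_mem_nhdsWithin] with t ht htx
    have htx : t - x < 0 := sub_neg.mpr htx
    rw [slope_def_field, ht, hfx, sub_zero, _root_.abs_of_neg htx]
    field_simp [htx.ne]
  have h₁ := tendsto_nhds_unique (hslope.mono_left (nhdsGT_le_nhdsNE x)) hright
  have h₂ := tendsto_nhds_unique (hslope.mono_left (nhdsLT_le_nhdsNE x)) hleft
  linarith

theorem ContDiffAt.fderiv_fderiv_apply_comm {E F : Type*} [NormedAddCommGroup E]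
    [NormedSpace ℝ E] [NormedAddCommGroup F] [NormedSpace ℝ F] {g : E → F} {p : E}
    (hg : ContDiffAt ℝ 2 g p) (e w : E) :
    fderiv ℝ (fun q => fderiv ℝ g q e) p w = fderiv ℝ (fun q => fderiv ℝ g q w) p e := by
  have hd : DifferentiableAt ℝ (fderiv ℝ g) p :=
    (hg.fderiv_right (m := 1) (by norm_num)).differentiableAt one_ne_zero
  rw [fderiv_clm_apply hd (differentiableAt_const e), fderiv_clm_apply hd (differentiableAt_const w)]
  simpa using hg.isSymmSndFDerivAt (by simp) w e

theorem eq_zero_of_eventuallyEq_sqrt_sq_add_sq_mul {φ g W : ℝ → ℝ}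
    (hφ : DifferentiableAt ℝ φ 0) (hg : DifferentiableAt ℝ g 0) (hg0 : g 0 = 0)
    (hW : ContinuousAt W 0) (h : φ =ᶠ[𝓝 0] fun t => √(g t ^ 2 + t ^ 2) * W t) :
    W 0 = 0 := by
  have hg_eq : ∀ t, g t = t * dslope g 0 t := fun t => by
    simpa [hg0] using (sub_smul_dslope g 0 t).symm
  have hk : ContinuousAt (fun t => √(dslope g 0 t ^ 2 + 1) * W t) 0 :=
    (((continuousAt_dslope_same.mpr hg).pow 2).add continuousAt_const).sqrt.mul hW
  have key := hφ.eq_zero_of_eventuallyEq_abs_sub_mul hk <| h.mono fun t ht => by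
    simp only at ht ⊢
    rw [ht, hg_eq t, sub_zero, ← mul_assoc,
      show (t * dslope g 0 t) ^ 2 + t ^ 2 = t ^ 2 * (dslope g 0 t ^ 2 + 1) by ring,
      Real.sqrt_mul' _ (by positivity), Real.sqrt_sq_eq_abs, mul_comm |t|]
  exact (mul_eq_zero.mp key).resolve_left (Real.sqrt_pos.mpr (by positivity)).ne'

theorem eq_zero_of_eventuallyEq_sqrt_sq_add_snd_sq_mul {F G v : ℝ × ℝ → ℝ} {x : ℝ}
    (hF : DifferentiableAt ℝ F (x, 0)) (hv : DifferentiableAt ℝ v (x, 0)) (hv0 : v (x, 0) = 0)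
    (hG : ContinuousAt G (x, 0))
    (h : F =ᶠ[𝓝 (x, 0)] fun q => √(v q ^ 2 + q.2 ^ 2) * G q) : G (x, 0) = 0 := by
  have hL : Continuous fun t : ℝ => (x, t) := Continuous.prodMk_right x
  have hLd : DifferentiableAt ℝ (fun t : ℝ => (x, t)) 0 :=
    (differentiableAt_const x).prodMk differentiableAt_id
  exact eq_zero_of_eventuallyEq_sqrt_sq_add_sq_mul (hF.comp 0 hLd) (hv.comp 0 hLd) hv0
    (hG.comp hL.continuousAt) (h.comp_tendsto (hL.tendsto 0))

section NonlinearCauchyRiemann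

variable {O : Set (ℝ × ℝ)} {a : ℝ} {u v : ℝ × ℝ → ℝ}

theorem flux_eq_neg_two_mul_fderiv_snd (hO : IsOpen O)
    (hu : ContDiffOn ℝ 2 u O) (hv : ContDiffOn ℝ 2 v O)
    (hCR2 : ∀ p ∈ O, fderiv ℝ v p ((1 : ℝ), (0 : ℝ)) =
      -2 * ((v p) ^ 2 + p.2 ^ 2 + a ^ 2) ^ ((1 : ℝ) / 2)
        * fderiv ℝ u p ((0 : ℝ), (1 : ℝ)))
    {p : ℝ × ℝ} (hp : p ∈ O) :
    (v p ^ 2 + p.2 ^ 2 + a ^ 2) ^ (-(1 : ℝ) / 2) * fderiv ℝ v p ((1 : ℝ), (0 : ℝ))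
      = -2 * fderiv ℝ u p ((0 : ℝ), (1 : ℝ)) := by
  rcases (by positivity : (0 : ℝ) ≤ v p ^ 2 + p.2 ^ 2 + a ^ 2).eq_or_lt with hE | hE
  · obtain ⟨hvp, hp2, rfl⟩ : v p = 0 ∧ p.2 = 0 ∧ a = 0 := by
      refine ⟨?_, ?_, ?_⟩ <;> nlinarith [sq_nonneg (v p), sq_nonneg p.2, sq_nonneg a]
    obtain ⟨x, rfl⟩ : ∃ x, p = (x, 0) := ⟨p.1, Prod.ext rfl hp2⟩
    have hu2 := hu.contDiffAt (hO.mem_nhds hp)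
    have hv2 := hv.contDiffAt (hO.mem_nhds hp)
    have hvx : DifferentiableAt ℝ (fun q => fderiv ℝ v q ((1 : ℝ), (0 : ℝ))) (x, 0) :=
      ((hv2.fderiv_right (m := 1) (by norm_num)).differentiableAt one_ne_zero).clm_apply
        (differentiableAt_const _)
    have huy : ContinuousAt (fun q => -2 * fderiv ℝ u q ((0 : ℝ), (1 : ℝ))) (x, 0) :=
      (((hu2.fderiv_right (m := 1) (by norm_num)).continuousAt).clm_apply
        continuousAt_const).const_mul _
    have hCR2' : (fun q => fderiv ℝ v q ((1 : ℝ), (0 : ℝ))) =ᶠ[𝓝 (x, 0)]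
        fun q => √(v q ^ 2 + q.2 ^ 2) * (-2 * fderiv ℝ u q ((0 : ℝ), (1 : ℝ))) :=
      eventually_of_mem (hO.mem_nhds hp) fun q hq => by
        simp only [hCR2 q hq, Real.sqrt_eq_rpow, zero_pow two_ne_zero, add_zero]
        ring
    have huy0 : fderiv ℝ u (x, 0) ((0 : ℝ), (1 : ℝ)) = 0 := by
      simpa using eq_zero_of_eventuallyEq_sqrt_sq_add_snd_sq_mul hvx
        (hv2.differentiableAt two_ne_zero) hvp huy hCR2'
    rw [← hE, huy0, Real.zero_rpow (by norm_num)]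
    ring
  · rw [hCR2 p hp]
    have h : (v p ^ 2 + p.2 ^ 2 + a ^ 2) ^ (-(1 : ℝ) / 2)
        * (v p ^ 2 + p.2 ^ 2 + a ^ 2) ^ ((1 : ℝ) / 2) = 1 := by
      rw [← Real.rpow_add hE]; norm_num
    linear_combination (-2 * fderiv ℝ u p ((0 : ℝ), (1 : ℝ))) * h

theorem Qop_eq_zero_of_eventuallyEq {p : ℝ × ℝ} (hu : ContDiffAt ℝ 2 u p)
    (hflux : (fun q => (v q ^ 2 + q.2 ^ 2 + a ^ 2) ^ (-(1 : ℝ) / 2)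
        * fderiv ℝ v q ((1 : ℝ), (0 : ℝ))) =ᶠ[𝓝 p] fun q => -2 * fderiv ℝ u q ((0 : ℝ), (1 : ℝ)))
    (hCR1 : (fun q => fderiv ℝ u q ((1 : ℝ), (0 : ℝ)))
        =ᶠ[𝓝 p] fun q => fderiv ℝ v q ((0 : ℝ), (1 : ℝ))) :
    Qop a v p = 0 := by
  have huy : DifferentiableAt ℝ (fun q => fderiv ℝ u q ((0 : ℝ), (1 : ℝ))) p :=
    ((hu.fderiv_right (m := 1) (by norm_num)).differentiableAt one_ne_zero).clm_apply
      (differentiableAt_const _)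
  rw [Qop, hflux.fderiv_eq, ← hCR1.fderiv_eq, fderiv_const_mul huy,
    smul_apply, smul_eq_mul, hu.fderiv_fderiv_apply_comm]
  ring

end NonlinearCauchyRiemann

theorem stmt_17_general (S U : Set (ℝ × ℝ)) (hSU : S ⊆ U)
    (a : ℝ) (u v : ℝ × ℝ → ℝ)
    (hu : ContDiffOn ℝ 2 u U) (hv : ContDiffOn ℝ 2 v U)
    (hCR1 : ∀ p ∈ S, fderiv ℝ u p ((1 : ℝ), (0 : ℝ)) = fderiv ℝ v p ((0 : ℝ), (1 : ℝ)))
    (hCR2 : ∀ p ∈ S, fderiv ℝ v p ((1 : ℝ), (0 : ℝ)) =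
      -2 * ((v p) ^ 2 + p.2 ^ 2 + a ^ 2) ^ ((1 : ℝ) / 2)
        * fderiv ℝ u p ((0 : ℝ), (1 : ℝ))) :
    ∀ p ∈ interior S, Qop a v p = 0 := by
  intro p hp
  have hO : interior S ∈ 𝓝 p := isOpen_interior.mem_nhds hp
  have hu' := hu.mono (interior_subset.trans hSU)
  have hv' := hv.mono (interior_subset.trans hSU)
  refine Qop_eq_zero_of_eventuallyEq (hu'.contDiffAt hO) ?_ ?_
  · filter_upwards [hO] with q hq using flux_eq_neg_two_mul_fderiv_snd isOpen_interior hu' hv'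
      (fun r hr => hCR2 r (interior_subset hr)) hq
  · filter_upwards [hO] with q hq using hCR1 q (interior_subset hq)

/-- Proposition 3.4 (first half): `C²` solutions of the nonlinear Cauchy–Riemann system
satisfy the second-order quasilinear equation `Q(v) = 0` in the interior of `S`. -/
theorem stmt_17 (S U : Set (ℝ × ℝ)) (hS : IsCompact S) (hU : IsOpen U) (hSU : S ⊆ U)
    (a : ℝ) (u v : ℝ × ℝ → ℝ)
    (hu : ContDiffOn ℝ 2 u U) (hv : ContDiffOn ℝ 2 v U)
    (hCR1 : ∀ p ∈ S, fderiv ℝ u p ((1 : ℝ), (0 : ℝ)) = fderiv ℝ v p ((0 : ℝ), (1 : ℝ)))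
    (hCR2 : ∀ p ∈ S, fderiv ℝ v p ((1 : ℝ), (0 : ℝ)) =
      -2 * ((v p) ^ 2 + p.2 ^ 2 + a ^ 2) ^ ((1 : ℝ) / 2)
        * fderiv ℝ u p ((0 : ℝ), (1 : ℝ))) :
    ∀ p ∈ interior S, Qop a v p = 0 :=
  stmt_17_general S U hSU a u v hu hv hCR1 hCR2
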